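/- arXiv:1704.02961 — 3 statements merged into one kernel-verified Lean document; each statement's English description precedes it below -/
import Mathlib

section
/- Assume β₀ x_max n₀ / m < μ. Let (f, g) be the solution of the system (L) linearized at the disease-free equilibrium (S*(x) = n₀x/m, I*(x) = 0): ∂f/∂t = (μ − β₀n₀x/m)g − D_S(f − (x/m)⟨f(·,t)⟩), ∂g/∂t = (−μ + β₀n₀x/m)g − D_I(g − (x/m)⟨g(·,t)⟩) on J × ℝ₊, with C¹ initial data (f₀, g₀) satisfying ⟨|f₀|⟩ < ∞, ⟨|g₀|⟩ < ∞ and ⟨f₀⟩ + ⟨g₀⟩ = 0. Then ∫₀^{x_max} |g(x,t)| p(x) dx < ∞ for all t > 0, and for every x ∈ J, g(x,t) → 0 and f(x,t) → 0 as t → ∞; that is, the disease-free equilibrium is linearly stable. -/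
/-!
Averaged against `p`, each redistribution term `-D (h - (x/m) ⟨h⟩)` has mean zero and the
reaction terms of the two equations cancel, so `⟨f⟩ + ⟨g⟩` is conserved, hence zero.
For fixed `x` the `g`-equation is a scalar linear ODE with rate
`-μ + β₀ n₀ x / m - D_I ≤ -(λ + D_I)`, where `λ = μ - β₀ x_max n₀ / m > 0`, forced by
`D_I (x/m) ⟨g⟩`. Integrating Duhamel's formula against `p` gives a convolution inequality for
`|⟨g⟩|`, which Gronwall's lemma turns into `|⟨g(t)⟩| ≤ ⟨|g(0)|⟩ e^{-λt}`. Feeding this back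
into Duhamel's formula gives `g(x,t) = O((1+t) e^{-λt})`, and since `⟨f⟩ = -⟨g⟩` the
`f`-equation is a linear ODE with rate `-D_S` and forcing `O((1+t) e^{-λt})`, so
`f(x,t) = O((1+t)² e^{-min(D_S,λ) t})`.
-/

open Real Set Filter MeasureTheory Topology

section LinearODE

variable {a : ℝ} {u R : ℝ → ℝ}

theorem eq_exp_mul_add_integral_of_hasDerivAt (hR : ContinuousOn R (Ici 0))
    (hu : ∀ t ≥ 0, HasDerivAt u (a * u t + R t) t) {t : ℝ} (ht : 0 ≤ t) :
    u t = exp (a * t) * u 0 + ∫ s in (0:ℝ)..t, exp (a * (t - s)) * R s := by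
  have hderiv : ∀ s ∈ uIcc 0 t, HasDerivAt (fun s => exp (a * (t - s)) * u s)
      (exp (a * (t - s)) * R s) s := by
    intro s hs
    rw [uIcc_of_le ht] at hs
    have he : HasDerivAt (fun s => exp (a * (t - s))) (exp (a * (t - s)) * (a * (0 - 1))) s :=
      (((hasDerivAt_const s t).sub (hasDerivAt_id s)).const_mul a).exp
    exact (he.mul (hu s hs.1)).congr_deriv (by ring)
  have hint : IntervalIntegrable (fun s => exp (a * (t - s)) * R s) volume 0 t :=
    (ContinuousOn.mul (by fun_prop) (hR.mono Icc_subset_Ici_self)).intervalIntegrable_of_Icc ht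
  rw [intervalIntegral.integral_eq_sub_of_hasDerivAt hderiv hint]
  simp

theorem abs_le_exp_mul_add_integral_of_hasDerivAt {c : ℝ} {ρ : ℝ → ℝ}
    (hR : ContinuousOn R (Ici 0)) (hρ : ContinuousOn ρ (Ici 0)) (hRρ : ∀ s ≥ 0, |R s| ≤ ρ s)
    (hac : a ≤ -c) (hu : ∀ t ≥ 0, HasDerivAt u (a * u t + R t) t) {t : ℝ} (ht : 0 ≤ t) :
    |u t| ≤ exp (-c * t) * |u 0| + ∫ s in (0:ℝ)..t, exp (-c * (t - s)) * ρ s := by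
  have hexp : ∀ s ≤ t, exp (a * (t - s)) ≤ exp (-c * (t - s)) := fun s hs =>
    exp_le_exp.2 (mul_le_mul_of_nonneg_right hac (sub_nonneg.2 hs))
  have hsub : Icc 0 t ⊆ Ici 0 := Icc_subset_Ici_self
  rw [eq_exp_mul_add_integral_of_hasDerivAt hR hu ht]
  refine (abs_add_le _ _).trans (add_le_add ?_ ?_)
  · rw [abs_mul, abs_exp]
    simpa using mul_le_mul_of_nonneg_right (hexp 0 ht) (abs_nonneg (u 0))
  · refine (intervalIntegral.abs_integral_le_integral_abs ht).trans
      (intervalIntegral.integral_mono_on ht ?_ ?_ fun s hs => ?_)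
    · exact (ContinuousOn.mul (by fun_prop) (hR.mono hsub)).abs.intervalIntegrable_of_Icc ht
    · exact (ContinuousOn.mul (by fun_prop) (hρ.mono hsub)).intervalIntegrable_of_Icc ht
    · rw [abs_mul, abs_exp]
      exact mul_le_mul (hexp s hs.2) (hRρ s hs.1) (abs_nonneg _) (exp_pos _).le

theorem exists_abs_le_one_add_pow_mul_exp_of_hasDerivAt {ν κ K : ℝ} {n : ℕ}
    (hR : ContinuousOn R (Ici 0)) (hRK : ∀ s ≥ 0, |R s| ≤ K * (1 + s) ^ n * exp (-κ * s))
    (haν : a ≤ -ν) (hνκ : ν ≤ κ) (hu : ∀ t ≥ 0, HasDerivAt u (a * u t + R t) t) :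
    ∃ C, ∀ t ≥ 0, |u t| ≤ C * (1 + t) ^ (n + 1) * exp (-ν * t) := by
  have hK : 0 ≤ K := by simpa using (abs_nonneg _).trans (hRK 0 le_rfl)
  refine ⟨|u 0| + K, fun t ht => ?_⟩
  have hρ : ∀ s ≥ 0, |R s| ≤ K * (1 + s) ^ n * exp (-ν * s) := fun s hs =>
    (hRK s hs).trans (mul_le_mul_of_nonneg_left (exp_le_exp.2 (by nlinarith)) (by positivity))
  have hconv : ∀ s ∈ Icc 0 t, exp (-ν * (t - s)) * (K * (1 + s) ^ n * exp (-ν * s))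
      ≤ K * (1 + t) ^ n * exp (-ν * t) := by
    intro s ⟨hs0, hst⟩
    calc exp (-ν * (t - s)) * (K * (1 + s) ^ n * exp (-ν * s))
        = K * (1 + s) ^ n * exp (-ν * (t - s) + -ν * s) := by rw [exp_add]; ring
      _ = K * (1 + s) ^ n * exp (-ν * t) := by ring_nf
      _ ≤ K * (1 + t) ^ n * exp (-ν * t) := by gcongr
  have hint : ∫ s in (0:ℝ)..t, exp (-ν * (t - s)) * (K * (1 + s) ^ n * exp (-ν * s))
      ≤ t * (K * (1 + t) ^ n * exp (-ν * t)) := by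
    refine (intervalIntegral.integral_mono_on ht ?_ intervalIntegrable_const hconv).trans_eq ?_
    · exact Continuous.intervalIntegrable (by fun_prop) _ _
    · rw [intervalIntegral.integral_const, smul_eq_mul, sub_zero]
  have hbound := abs_le_exp_mul_add_integral_of_hasDerivAt hR (by fun_prop) hρ haν hu ht
  have h1 : 1 ≤ (1 + t) ^ (n + 1) := one_le_pow₀ (by linarith)
  have h2 : t * (1 + t) ^ n ≤ (1 + t) ^ (n + 1) := by
    rw [pow_succ']; gcongr; linarith
  have he := exp_pos (-ν * t)
  calc |u t| ≤ exp (-ν * t) * |u 0| + t * (K * (1 + t) ^ n * exp (-ν * t)) := by linarith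
    _ ≤ exp (-ν * t) * (|u 0| * (1 + t) ^ (n + 1)) + K * (1 + t) ^ (n + 1) * exp (-ν * t) := by
        refine add_le_add (mul_le_mul_of_nonneg_left (le_mul_of_one_le_right (abs_nonneg _) h1)
          he.le) ?_
        calc t * (K * (1 + t) ^ n * exp (-ν * t)) = K * (t * (1 + t) ^ n) * exp (-ν * t) := by
              ring
          _ ≤ K * (1 + t) ^ (n + 1) * exp (-ν * t) := by gcongr
    _ = (|u 0| + K) * (1 + t) ^ (n + 1) * exp (-ν * t) := by ring

theorem tendsto_zero_of_abs_le_one_add_pow_mul_exp {ν C : ℝ} {n : ℕ} (hν : 0 < ν)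
    (hu : ∀ t ≥ 0, |u t| ≤ C * (1 + t) ^ n * exp (-ν * t)) : Tendsto u atTop (𝓝 0) := by
  have hlim : Tendsto (fun t => (1 + t) ^ n * exp (-ν * t)) atTop (𝓝 0) := by
    have h := ((tendsto_pow_mul_exp_neg_atTop_nhds_zero n).comp
      ((tendsto_atTop_add_const_left atTop 1 tendsto_id).const_mul_atTop hν)).const_mul
      (exp ν / ν ^ n)
    rw [mul_zero] at h
    refine h.congr fun t => ?_
    rw [Function.comp_apply, id, mul_pow, show -(ν * (1 + t)) = -ν * t + -ν by ring, exp_add,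
      exp_neg ν]
    field_simp
  refine squeeze_zero_norm' (eventually_ge_atTop 0 |>.mono fun t ht => ?_)
    (by simpa using hlim.const_mul C)
  simpa [mul_assoc] using hu t ht

end LinearODE

theorem eq_of_hasDerivAt_zero_of_continuousOn_Ici {φ : ℝ → ℝ} {a : ℝ}
    (hφ : ContinuousOn φ (Ici a)) (hderiv : ∀ s > a, HasDerivAt φ 0 s) {t : ℝ} (ht : a ≤ t) :
    φ t = φ a := by
  rcases ht.eq_or_lt with rfl | hat
  · rfl
  obtain ⟨ξ, -, hslope⟩ := exists_hasDerivAt_eq_slope φ (fun _ => 0) hat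
    (hφ.mono Icc_subset_Ici_self) fun x hx => hderiv x hx.1
  rw [eq_comm, div_eq_zero_iff, sub_eq_zero] at hslope
  exact hslope.resolve_right (sub_ne_zero.2 hat.ne')

theorem le_mul_exp_of_le_add_mul_integral {H : ℝ → ℝ} {A D : ℝ} (hH : ContinuousOn H (Ici 0))
    (hD : 0 ≤ D) (h : ∀ t ≥ 0, H t ≤ A + D * ∫ s in (0:ℝ)..t, H s) {t : ℝ} (ht : 0 ≤ t) :
    H t ≤ A * exp (D * t) := by
  set W : ℝ → ℝ := fun t => ∫ s in (0:ℝ)..t, H s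
  have hWderiv : ∀ x ∈ Ico 0 t, HasDerivWithinAt W (H x) (Ici x) x := fun x hx =>
    intervalIntegral.integral_hasDerivWithinAt_right
      ((hH.mono Icc_subset_Ici_self).intervalIntegrable_of_Icc hx.1)
      ((hH.mono fun y hy => hx.1.trans hy.le).stronglyMeasurableAtFilter_nhdsWithin
        measurableSet_Ioi x)
      ((hH x hx.1).mono fun y hy => hx.1.trans hy.le)
  have hWcont : ContinuousOn W (Icc 0 t) := by
    rw [← uIcc_of_le ht]
    exact intervalIntegral.continuousOn_primitive_interval
      ((hH.mono (uIcc_of_le ht ▸ Icc_subset_Ici_self)).integrableOn_compact isCompact_uIcc)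
  have hWt := le_gronwallBound_of_liminf_deriv_right_le (δ := 0) (K := D) (ε := A) hWcont
    (fun x hx r hr => (hWderiv x hx).liminf_right_slope_le hr) (by simp [W])
    (fun x hx => (h x hx.1).trans_eq (add_comm _ _)) t ⟨ht, le_rfl⟩
  refine (h t ht).trans ?_
  rcases eq_or_ne D 0 with rfl | hD0
  · simp
  · have := mul_le_mul_of_nonneg_left hWt hD
    rw [gronwallBound_of_K_ne_0 hD0, sub_zero] at this
    field_simp at this
    linarith

theorem le_mul_exp_of_le_exp_mul_add_mul_integral {v : ℝ → ℝ} {A D κ : ℝ}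
    (hv : ContinuousOn v (Ici 0)) (hD : 0 ≤ D)
    (h : ∀ t ≥ 0, v t ≤ exp (-κ * t) * A + D * ∫ s in (0:ℝ)..t, exp (-κ * (t - s)) * v s)
    {t : ℝ} (ht : 0 ≤ t) : v t ≤ A * exp ((D - κ) * t) := by
  have hH : ∀ s ≥ 0, exp (κ * s) * v s ≤ A + D * ∫ r in (0:ℝ)..s, exp (κ * r) * v r := by
    intro s hs
    have hconv : exp (κ * s) * ∫ r in (0:ℝ)..s, exp (-κ * (s - r)) * v r
        = ∫ r in (0:ℝ)..s, exp (κ * r) * v r := by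
      rw [← intervalIntegral.integral_const_mul]
      refine intervalIntegral.integral_congr fun r _ => ?_
      simp only [← mul_assoc, ← exp_add]
      ring_nf
    calc exp (κ * s) * v s
        ≤ exp (κ * s) * (exp (-κ * s) * A + D * ∫ r in (0:ℝ)..s, exp (-κ * (s - r)) * v r) :=
          mul_le_mul_of_nonneg_left (h s hs) (exp_pos _).le
      _ = A + D * ∫ r in (0:ℝ)..s, exp (κ * r) * v r := by
          rw [← hconv, mul_add, ← mul_assoc, ← exp_add]
          simp only [neg_mul, add_neg_cancel, exp_zero, one_mul]
          ring
  have hHt := le_mul_exp_of_le_add_mul_integral (ContinuousOn.mul (by fun_prop) hv) hD hH ht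
  calc v t = exp (-κ * t) * (exp (κ * t) * v t) := by
        rw [← mul_assoc, ← exp_add, neg_mul, neg_add_cancel, exp_zero, one_mul]
    _ ≤ exp (-κ * t) * (A * exp (D * t)) := mul_le_mul_of_nonneg_left hHt (exp_pos _).le
    _ = A * exp ((D - κ) * t) := by rw [mul_left_comm, ← exp_add]; ring_nf

section WeightedIntegral

variable {a b : ℝ} {p : ℝ → ℝ}

theorem continuousOn_integral_mul_of_continuousOn_uncurry (hp : IntervalIntegrable p volume a b)
    {h : ℝ → ℝ → ℝ} {U : Set ℝ} (hU : IsClosed U)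
    (hh : ContinuousOn (Function.uncurry h) (uIcc a b ×ˢ U)) :
    ContinuousOn (fun t => ∫ x in a..b, h x t * p x) U := by
  intro t₀ ht₀
  obtain ⟨C, hC⟩ := (isCompact_uIcc.prod ((isCompact_closedBall t₀ 1).inter_left hU)
    ).exists_bound_of_continuousOn (hh.mono (prod_mono le_rfl inter_subset_left))
  refine intervalIntegral.continuousWithinAt_of_dominated_interval (bound := fun x => C * ‖p x‖)
    ?_ ?_ (hp.norm.const_mul C) (ae_of_all _ fun x hx => ?_)
  · filter_upwards [self_mem_nhdsWithin] with t ht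
    exact (hp.continuousOn_mul (hh.uncurry_right t ht)).def'.aestronglyMeasurable
  · filter_upwards [self_mem_nhdsWithin,
      nhdsWithin_le_nhds (Metric.closedBall_mem_nhds t₀ one_pos)] with t ht ht'
    refine ae_of_all _ fun x hx => ?_
    rw [norm_mul]
    exact mul_le_mul_of_nonneg_right (hC (x, t) ⟨uIoc_subset_uIcc hx, ht, ht'⟩) (norm_nonneg _)
  · exact ((hh.uncurry_left x (uIoc_subset_uIcc hx)) t₀ ht₀).mul continuousWithinAt_const

theorem hasDerivAt_integral_mul_of_continuousOn_uncurry (hp : IntervalIntegrable p volume a b)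
    {h h' : ℝ → ℝ → ℝ} {U : Set ℝ} (hU : IsOpen U)
    (hh : ∀ t ∈ U, ContinuousOn (fun x => h x t) (uIcc a b))
    (hh' : ContinuousOn (Function.uncurry h') (uIcc a b ×ˢ U))
    (hderiv : ∀ x ∈ uIcc a b, ∀ t ∈ U, HasDerivAt (h x) (h' x t) t) {t₀ : ℝ} (ht₀ : t₀ ∈ U) :
    HasDerivAt (fun t => ∫ x in a..b, h x t * p x) (∫ x in a..b, h' x t₀ * p x) t₀ := by
  obtain ⟨K, hK, hKt₀, hKU⟩ := exists_compact_subset hU ht₀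
  obtain ⟨C, hC⟩ := (isCompact_uIcc.prod hK).exists_bound_of_continuousOn
    (hh'.mono (prod_mono le_rfl hKU))
  refine (intervalIntegral.hasDerivAt_integral_of_dominated_loc_of_deriv_le
    (F' := fun t x => h' x t * p x) (bound := fun x => C * ‖p x‖)
    (mem_interior_iff_mem_nhds.1 hKt₀) ?_ (hp.continuousOn_mul (hh t₀ ht₀))
    (hp.continuousOn_mul (hh'.uncurry_right t₀ ht₀)).def'.aestronglyMeasurable ?_
    (hp.norm.const_mul C) ?_).2
  · filter_upwards [hU.mem_nhds ht₀] with t ht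
    exact (hp.continuousOn_mul (hh t ht)).def'.aestronglyMeasurable
  · refine ae_of_all _ fun x hx t ht => ?_
    rw [norm_mul]
    exact mul_le_mul_of_nonneg_right (hC (x, t) ⟨uIoc_subset_uIcc hx, ht⟩) (norm_nonneg _)
  · exact ae_of_all _ fun x hx t ht =>
      (hderiv x (uIoc_subset_uIcc hx) t (hKU ht)).mul_const (p x)

theorem integral_sub_div_mul_integral_mul_eq_zero {m : ℝ} {q : ℝ → ℝ}
    (hm : ∫ x in a..b, x * p x = m) (hm0 : m ≠ 0)
    (hq : IntervalIntegrable (fun x => q x * p x) volume a b) :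
    ∫ x in a..b, (q x - x / m * ∫ y in a..b, q y * p y) * p x = 0 := by
  have hxp : IntervalIntegrable (fun x => x * p x) volume a b :=
    intervalIntegral.intervalIntegrable_of_integral_ne_zero (hm ▸ hm0)
  have hsplit : ∀ x, (q x - x / m * ∫ y in a..b, q y * p y) * p x
      = q x * p x - (∫ y in a..b, q y * p y) / m * (x * p x) := fun x => by ring
  simp_rw [hsplit]
  rw [intervalIntegral.integral_sub hq (hxp.const_mul _), intervalIntegral.integral_const_mul, hm]
  field_simp
  ring

end WeightedIntegral

section Relaxation

variable {D k lam A : ℝ} {u M : ℝ → ℝ}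

theorem abs_le_exp_mul_add_integral_of_hasDerivAt_mul_self_sub {c κ : ℝ}
    (hM : ContinuousOn M (Ici 0)) (hc : c ≤ -κ) (hD : 0 ≤ D) (hk : 0 ≤ k)
    (hu : ∀ t ≥ 0, HasDerivAt u (c * u t - D * (u t - k * M t)) t) {t : ℝ} (ht : 0 ≤ t) :
    |u t| ≤ exp (-(κ + D) * t) * |u 0| +
      k * D * ∫ s in (0:ℝ)..t, exp (-(κ + D) * (t - s)) * |M s| := by
  have h := abs_le_exp_mul_add_integral_of_hasDerivAt (a := c - D) (c := κ + D)
    (R := fun s => k * D * M s) (ρ := fun s => k * D * |M s|) (continuousOn_const.mul hM)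
    (continuousOn_const.mul hM.abs)
    (fun s _ => by rw [abs_mul, abs_of_nonneg (mul_nonneg hk hD)]) (by linarith)
    (fun s hs => (hu s hs).congr_deriv (by ring)) ht
  simpa only [mul_left_comm _ (k * D), intervalIntegral.integral_const_mul] using h

theorem exists_abs_le_of_hasDerivAt_mul_self_sub {c : ℝ} (hM : ContinuousOn M (Ici 0))
    (hMA : ∀ s ≥ 0, |M s| ≤ A * exp (-lam * s)) (hc : c ≤ -lam) (hD : 0 ≤ D) (hk : 0 ≤ k)
    (hu : ∀ t ≥ 0, HasDerivAt u (c * u t - D * (u t - k * M t)) t) :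
    ∃ C, ∀ t ≥ 0, |u t| ≤ C * (1 + t) ^ 1 * exp (-lam * t) :=
  exists_abs_le_one_add_pow_mul_exp_of_hasDerivAt (n := 0) (a := c - D)
    (R := fun s => D * k * M s) (K := D * k * A) (continuousOn_const.mul hM)
    (fun s hs => by
      rw [abs_mul, abs_of_nonneg (by positivity), pow_zero, mul_one, mul_assoc _ A]
      exact mul_le_mul_of_nonneg_left (hMA s hs) (by positivity))
    (by linarith) le_rfl fun t ht => (hu t ht).congr_deriv (by ring)

theorem exists_abs_le_of_hasDerivAt_mul_sub {b C : ℝ} {v : ℝ → ℝ} (hv : ContinuousOn v (Ici 0))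
    (hM : ContinuousOn M (Ici 0)) (hvC : ∀ s ≥ 0, |v s| ≤ C * (1 + s) ^ 1 * exp (-lam * s))
    (hMA : ∀ s ≥ 0, |M s| ≤ A * exp (-lam * s)) (hD : 0 < D) (hk : 0 ≤ k)
    (hu : ∀ t ≥ 0, HasDerivAt u (b * v t - D * (u t - k * M t)) t) :
    ∃ K, ∀ t ≥ 0, |u t| ≤ K * (1 + t) ^ 2 * exp (-min D lam * t) := by
  refine exists_abs_le_one_add_pow_mul_exp_of_hasDerivAt (n := 1) (a := -D)
    (R := fun s => b * v s + D * k * M s) (K := |b| * C + D * k * A)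
    ((continuousOn_const.mul hv).add (continuousOn_const.mul hM)) (fun s hs => ?_)
    (neg_le_neg (min_le_left _ _)) (min_le_right _ _) fun t ht => (hu t ht).congr_deriv (by ring)
  have hMs : |M s| ≤ A * exp (-lam * s) * (1 + s) :=
    (hMA s hs).trans (le_mul_of_one_le_right ((abs_nonneg _).trans (hMA s hs)) (by linarith))
  calc |b * v s + D * k * M s| ≤ |b| * |v s| + D * k * |M s| := by
        refine (abs_add_le _ _).trans_eq ?_
        rw [abs_mul, abs_mul, abs_of_nonneg (by positivity : 0 ≤ D * k)]
    _ ≤ |b| * (C * (1 + s) ^ 1 * exp (-lam * s)) + D * k * (A * exp (-lam * s) * (1 + s)) := by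
        gcongr
        exact hvC s hs
    _ = (|b| * C + D * k * A) * (1 + s) ^ 1 * exp (-lam * s) := by ring

end Relaxation

section Redistribution

variable {X m D : ℝ} {p : ℝ → ℝ}

theorem hasDerivAt_integral_mul_of_hasDerivAt_redistribution {w h : ℝ → ℝ → ℝ}
    (hX : 0 ≤ X) (hp : IntervalIntegrable p volume 0 X) (hm : m ≠ 0)
    (hm_def : m = ∫ x in (0:ℝ)..X, x * p x)
    (hw : ContinuousOn (Function.uncurry w) (Icc 0 X ×ˢ Ici 0))
    (hh : ContinuousOn (Function.uncurry h) (Icc 0 X ×ˢ Ici 0))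
    (heq : ∀ x ∈ Icc (0:ℝ) X, ∀ t ∈ Ici (0:ℝ), HasDerivAt (h x)
      (w x t - D * (h x t - x / m * ∫ y in (0:ℝ)..X, h y t * p y)) t)
    {t : ℝ} (ht : 0 < t) :
    HasDerivAt (fun t => ∫ x in (0:ℝ)..X, h x t * p x) (∫ x in (0:ℝ)..X, w x t * p x) t := by
  set H : ℝ → ℝ := fun t => ∫ x in (0:ℝ)..X, h x t * p x
  have hJ : uIcc 0 X = Icc 0 X := uIcc_of_le hX
  have hS : Icc 0 X ×ˢ Ioi (0:ℝ) ⊆ Icc 0 X ×ˢ Ici 0 := prod_mono le_rfl Ioi_subset_Ici_self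
  have hH : ContinuousOn H (Ici 0) :=
    continuousOn_integral_mul_of_continuousOn_uncurry hp isClosed_Ici (hJ ▸ hh)
  have hh' : ContinuousOn (Function.uncurry fun x t => w x t - D * (h x t - x / m * H t))
      (uIcc 0 X ×ˢ Ioi 0) := by
    rw [hJ]
    exact (hw.mono hS).sub (continuousOn_const.mul ((hh.mono hS).sub
      ((continuousOn_fst.div_const m).mul
        (hH.comp continuousOn_snd fun z hz => Ioi_subset_Ici_self hz.2))))
  refine (hasDerivAt_integral_mul_of_continuousOn_uncurry hp isOpen_Ioi
    (fun s hs => hJ ▸ hh.uncurry_right s (Ioi_subset_Ici_self hs)) hh'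
    (fun x hx s hs => heq x (hJ ▸ hx) s (Ioi_subset_Ici_self hs)) ht).congr_deriv ?_
  have hht := hh.uncurry_right t ht.le
  have hint : ∀ q : ℝ → ℝ, ContinuousOn q (Icc 0 X) →
      IntervalIntegrable (fun x => q x * p x) volume 0 X := fun _ hq =>
    hp.continuousOn_mul (hJ ▸ hq)
  have hr := hint (fun x => h x t - x / m * H t)
    (hht.sub ((continuousOn_id.div_const m).mul continuousOn_const))
  rw [intervalIntegral.integral_congr
      (g := fun x => w x t * p x - D * ((h x t - x / m * H t) * p x)) fun x _ => by ring,
    intervalIntegral.integral_sub (hint _ (hw.uncurry_right t ht.le)) (hr.const_mul D),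
    intervalIntegral.integral_const_mul,
    integral_sub_div_mul_integral_mul_eq_zero hm_def.symm hm (hint _ hht), mul_zero, sub_zero]

theorem integral_add_integral_eq_of_hasDerivAt {DS DI : ℝ} {cf cg : ℝ → ℝ} {f g : ℝ → ℝ → ℝ}
    (hX : 0 ≤ X) (hp : IntervalIntegrable p volume 0 X) (hm : m ≠ 0)
    (hm_def : m = ∫ x in (0:ℝ)..X, x * p x) (hcf : ContinuousOn cf (Icc 0 X))
    (hcg : ContinuousOn cg (Icc 0 X)) (hc : ∀ x ∈ Icc 0 X, cf x + cg x = 0)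
    (hf : ContinuousOn (Function.uncurry f) (Icc 0 X ×ˢ Ici 0))
    (hg : ContinuousOn (Function.uncurry g) (Icc 0 X ×ˢ Ici 0))
    (hfeq : ∀ x ∈ Icc (0:ℝ) X, ∀ t ∈ Ici (0:ℝ), HasDerivAt (f x)
      (cf x * g x t - DS * (f x t - x / m * ∫ y in (0:ℝ)..X, f y t * p y)) t)
    (hgeq : ∀ x ∈ Icc (0:ℝ) X, ∀ t ∈ Ici (0:ℝ), HasDerivAt (g x)
      (cg x * g x t - DI * (g x t - x / m * ∫ y in (0:ℝ)..X, g y t * p y)) t)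
    {t : ℝ} (ht : 0 ≤ t) :
    (∫ x in (0:ℝ)..X, f x t * p x) + (∫ x in (0:ℝ)..X, g x t * p x) =
      (∫ x in (0:ℝ)..X, f x 0 * p x) + (∫ x in (0:ℝ)..X, g x 0 * p x) := by
  have hJ : uIcc 0 X = Icc 0 X := uIcc_of_le hX
  have hcoef : ∀ {c : ℝ → ℝ}, ContinuousOn c (Icc 0 X) →
      ContinuousOn (Function.uncurry fun x t => c x * g x t) (Icc 0 X ×ˢ Ici 0) := fun hc' =>
    (hc'.comp continuousOn_fst fun z hz => hz.1).mul hg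
  refine eq_of_hasDerivAt_zero_of_continuousOn_Ici (φ := fun t =>
    (∫ x in (0:ℝ)..X, f x t * p x) + ∫ x in (0:ℝ)..X, g x t * p x)
    ((continuousOn_integral_mul_of_continuousOn_uncurry hp isClosed_Ici (hJ ▸ hf)).add
      (continuousOn_integral_mul_of_continuousOn_uncurry hp isClosed_Ici (hJ ▸ hg)))
    (fun s hs => ?_) ht
  refine ((hasDerivAt_integral_mul_of_hasDerivAt_redistribution (w := fun x t => cf x * g x t)
    hX hp hm hm_def (hcoef hcf) hf hfeq hs).add
    (hasDerivAt_integral_mul_of_hasDerivAt_redistribution (w := fun x t => cg x * g x t)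
    hX hp hm hm_def (hcoef hcg) hg hgeq hs)).congr_deriv ?_
  have hint : ∀ {c : ℝ → ℝ}, ContinuousOn c (Icc 0 X) →
      IntervalIntegrable (fun x => c x * g x s * p x) volume 0 X := fun hc' =>
    hp.continuousOn_mul (hJ ▸ (hcoef hc').uncurry_right s (Ioi_subset_Ici_self hs))
  rw [← intervalIntegral.integral_add (hint hcf) (hint hcg)]
  refine (intervalIntegral.integral_congr (g := fun _ => 0) fun x hx => ?_).trans
    intervalIntegral.integral_zero
  simp only
  rw [← add_mul, ← add_mul, hc x (hJ ▸ hx), zero_mul, zero_mul]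

theorem abs_integral_mul_le_of_hasDerivAt {κ : ℝ} {c : ℝ → ℝ} {g : ℝ → ℝ → ℝ}
    (hX : 0 ≤ X) (hp_nonneg : ∀ x ∈ Icc 0 X, 0 ≤ p x) (hp : IntervalIntegrable p volume 0 X)
    (hm : 0 < m) (hm_def : m = ∫ x in (0:ℝ)..X, x * p x) (hD : 0 ≤ D)
    (hc : ∀ x ∈ Icc 0 X, c x ≤ -κ) (hg : ContinuousOn (Function.uncurry g) (Icc 0 X ×ˢ Ici 0))
    (hgeq : ∀ x ∈ Icc (0:ℝ) X, ∀ t ∈ Ici (0:ℝ), HasDerivAt (g x)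
      (c x * g x t - D * (g x t - x / m * ∫ y in (0:ℝ)..X, g y t * p y)) t)
    {t : ℝ} (ht : 0 ≤ t) :
    |∫ x in (0:ℝ)..X, g x t * p x| ≤ (∫ x in (0:ℝ)..X, |g x 0| * p x) * exp (-κ * t) := by
  set G : ℝ → ℝ := fun t => ∫ x in (0:ℝ)..X, g x t * p x
  set A := ∫ x in (0:ℝ)..X, |g x 0| * p x
  set I : ℝ → ℝ := fun t => ∫ s in (0:ℝ)..t, exp (-(κ + D) * (t - s)) * |G s|
  have hJ : uIcc 0 X = Icc 0 X := uIcc_of_le hX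
  have hint : ∀ q : ℝ → ℝ, ContinuousOn q (Icc 0 X) →
      IntervalIntegrable (fun x => q x * p x) volume 0 X := fun _ hq =>
    hp.continuousOn_mul (hJ ▸ hq)
  have hG : ContinuousOn G (Ici 0) :=
    continuousOn_integral_mul_of_continuousOn_uncurry hp isClosed_Ici (hJ ▸ hg)
  have hpoint : ∀ x ∈ Icc 0 X, ∀ t ≥ 0,
      |g x t| ≤ exp (-(κ + D) * t) * |g x 0| + x / m * D * I t := fun x hx t ht =>
    abs_le_exp_mul_add_integral_of_hasDerivAt_mul_self_sub hG (hc x hx) hD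
      (div_nonneg hx.1 hm.le) (hgeq x hx) ht
  have hmean : ∀ t ≥ 0, |G t| ≤ exp (-(κ + D) * t) * A + D * I t := by
    intro t ht
    have hgt := hg.uncurry_right t ht
    have hg0 := hg.uncurry_right 0 le_rfl
    calc |G t| ≤ ∫ x in (0:ℝ)..X, |g x t| * p x := by
          refine (intervalIntegral.abs_integral_le_integral_abs hX).trans_eq
            (intervalIntegral.integral_congr fun x hx => ?_)
          rw [hJ] at hx
          simp only [abs_mul, abs_of_nonneg (hp_nonneg x hx)]
      _ ≤ ∫ x in (0:ℝ)..X, (exp (-(κ + D) * t) * |g x 0| + x / m * D * I t) * p x :=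
          intervalIntegral.integral_mono_on hX (hint _ hgt.abs)
            (hint _ ((continuousOn_const.mul hg0.abs).add
              (((continuousOn_id.div_const m).mul continuousOn_const).mul continuousOn_const)))
            fun x hx => mul_le_mul_of_nonneg_right (hpoint x hx t ht) (hp_nonneg x hx)
      _ = exp (-(κ + D) * t) * A + D * I t / m * m := by
          have hxp : IntervalIntegrable (fun x => x * p x) volume 0 X :=
            intervalIntegral.intervalIntegrable_of_integral_ne_zero (hm_def ▸ hm.ne')
          rw [intervalIntegral.integral_congr (g := fun x =>
              exp (-(κ + D) * t) * (|g x 0| * p x) + D * I t / m * (x * p x)) fun x _ => by ring,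
            intervalIntegral.integral_add ((hint _ hg0.abs).const_mul _) (hxp.const_mul _),
            intervalIntegral.integral_const_mul, intervalIntegral.integral_const_mul, ← hm_def]
      _ = exp (-(κ + D) * t) * A + D * I t := by field_simp
  have := le_mul_exp_of_le_exp_mul_add_mul_integral hG.abs hD hmean ht
  simpa only [sub_add_cancel_right] using this

end Redistribution

theorem linear_stability_DFE_general
    (xmax m μ β₀ DS DI n₀ : ℝ) (p : ℝ → ℝ)
    (hxmax : 0 < xmax) (hm : 0 < m) (hβ₀ : 0 < β₀)
    (hDS : 0 < DS) (hDI : 0 < DI) (hn₀ : 0 < n₀)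
    (hp_nonneg : ∀ x ∈ Icc (0:ℝ) xmax, 0 ≤ p x)
    (hp_int : ∫ x in (0:ℝ)..xmax, p x = 1)
    (hm_def : m = ∫ x in (0:ℝ)..xmax, x * p x)
    (hthreshold : β₀ * xmax * n₀ / m < μ)
    (f g : ℝ → ℝ → ℝ)
    (hf_smooth : ContDiffOn ℝ 1 (Function.uncurry f) (Icc 0 xmax ×ˢ Ici 0))
    (hg_smooth : ContDiffOn ℝ 1 (Function.uncurry g) (Icc 0 xmax ×ˢ Ici 0))
    (hzero_mean : (∫ x in (0:ℝ)..xmax, f x 0 * p x) +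
      (∫ x in (0:ℝ)..xmax, g x 0 * p x) = 0)
    (hfeq : ∀ x ∈ Icc (0:ℝ) xmax, ∀ t ∈ Ici (0:ℝ),
      HasDerivAt (f x)
        ((μ - β₀ * n₀ * x / m) * g x t -
          DS * (f x t - x / m * ∫ y in (0:ℝ)..xmax, f y t * p y)) t)
    (hgeq : ∀ x ∈ Icc (0:ℝ) xmax, ∀ t ∈ Ici (0:ℝ),
      HasDerivAt (g x)
        ((-μ + β₀ * n₀ * x / m) * g x t -
          DI * (g x t - x / m * ∫ y in (0:ℝ)..xmax, g y t * p y)) t) :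
    (∀ t > (0:ℝ),
      IntervalIntegrable (fun x => |g x t| * p x) MeasureTheory.volume 0 xmax) ∧
    ∀ x ∈ Icc (0:ℝ) xmax,
      Tendsto (fun t => g x t) atTop (nhds 0) ∧
      Tendsto (fun t => f x t) atTop (nhds 0) := by
  have hX := hxmax.le
  have hJ : uIcc 0 xmax = Icc 0 xmax := uIcc_of_le hX
  have hp : IntervalIntegrable p volume 0 xmax :=
    intervalIntegral.intervalIntegrable_of_integral_ne_zero (by rw [hp_int]; exact one_ne_zero)
  have hf := hf_smooth.continuousOn
  have hg := hg_smooth.continuousOn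
  set F : ℝ → ℝ := fun t => ∫ x in (0:ℝ)..xmax, f x t * p x
  set G : ℝ → ℝ := fun t => ∫ x in (0:ℝ)..xmax, g x t * p x
  set A := ∫ x in (0:ℝ)..xmax, |g x 0| * p x
  set lam := μ - β₀ * xmax * n₀ / m
  have hlam : 0 < lam := sub_pos.2 hthreshold
  have hc : ∀ x ∈ Icc 0 xmax, -μ + β₀ * n₀ * x / m ≤ -lam := fun x hx => by
    have : β₀ * n₀ * x / m ≤ β₀ * xmax * n₀ / m := by
      rw [mul_right_comm β₀]; gcongr; exact hx.2
    linarith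
  have hG : ∀ t ≥ 0, |G t| ≤ A * exp (-lam * t) := fun t ht =>
    abs_integral_mul_le_of_hasDerivAt hX hp_nonneg hp hm hm_def hDI.le hc hg hgeq ht
  have hFG : ∀ t ≥ 0, F t = -G t := fun t ht => by
    have := integral_add_integral_eq_of_hasDerivAt hX hp hm.ne' hm_def
      (cf := fun x => μ - β₀ * n₀ * x / m) (cg := fun x => -μ + β₀ * n₀ * x / m)
      (by fun_prop) (by fun_prop) (fun x _ => by ring) hf hg hfeq hgeq ht
    linarith
  have hFc : ContinuousOn F (Ici 0) :=
    continuousOn_integral_mul_of_continuousOn_uncurry hp isClosed_Ici (hJ ▸ hf)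
  have hGc : ContinuousOn G (Ici 0) :=
    continuousOn_integral_mul_of_continuousOn_uncurry hp isClosed_Ici (hJ ▸ hg)
  refine ⟨fun t ht => hp.continuousOn_mul (hJ ▸ (hg.uncurry_right t ht.le).abs), fun x hx => ?_⟩
  have hxm : 0 ≤ x / m := div_nonneg hx.1 hm.le
  obtain ⟨C, hgC⟩ := exists_abs_le_of_hasDerivAt_mul_self_sub hGc hG (hc x hx) hDI.le hxm
    (hgeq x hx)
  obtain ⟨K, hfK⟩ := exists_abs_le_of_hasDerivAt_mul_sub (hg.uncurry_left x hx) hFc hgC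
    (fun s hs => by rw [hFG s hs, abs_neg]; exact hG s hs) hDS hxm (hfeq x hx)
  exact ⟨tendsto_zero_of_abs_le_one_add_pow_mul_exp hlam hgC,
    tendsto_zero_of_abs_le_one_add_pow_mul_exp (lt_min hDS hlam) hfK⟩

/-- Theorem 3 (`deh2`): if `β₀ x_max n₀ / m < μ`, the disease-free equilibrium
`(S*(x) = n₀ x/m, I* = 0)` is linearly stable: for any solution `(f,g)` of the
linearized system `(L)` with initial data of zero total mean, `⟨|g(·,t)|⟩ < ∞` for
all `t > 0` and `f(x,t), g(x,t) → 0` as `t → ∞` for every `x ∈ J`. -/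
theorem linear_stability_DFE
    (xmax m μ β₀ DS DI n₀ : ℝ) (p : ℝ → ℝ)
    (hxmax : 0 < xmax) (hm : 0 < m) (hμ : 0 < μ) (hβ₀ : 0 < β₀)
    (hDS : 0 < DS) (hDI : 0 < DI) (hn₀ : 0 < n₀)
    (hp_nonneg : ∀ x ∈ Icc (0:ℝ) xmax, 0 ≤ p x) (hp0 : p 0 = 0)
    (hp_int : ∫ x in (0:ℝ)..xmax, p x = 1)
    (hm_def : m = ∫ x in (0:ℝ)..xmax, x * p x)
    (hthreshold : β₀ * xmax * n₀ / m < μ)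
    (f g : ℝ → ℝ → ℝ)
    (hf_smooth : ContDiffOn ℝ 1 (Function.uncurry f) (Icc 0 xmax ×ˢ Ici 0))
    (hg_smooth : ContDiffOn ℝ 1 (Function.uncurry g) (Icc 0 xmax ×ˢ Ici 0))
    (hf0_int : IntervalIntegrable (fun x => |f x 0| * p x) MeasureTheory.volume 0 xmax)
    (hg0_int : IntervalIntegrable (fun x => |g x 0| * p x) MeasureTheory.volume 0 xmax)
    (hzero_mean : (∫ x in (0:ℝ)..xmax, f x 0 * p x) +
      (∫ x in (0:ℝ)..xmax, g x 0 * p x) = 0)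
    (hfeq : ∀ x ∈ Icc (0:ℝ) xmax, ∀ t ∈ Ici (0:ℝ),
      HasDerivAt (f x)
        ((μ - β₀ * n₀ * x / m) * g x t -
          DS * (f x t - x / m * ∫ y in (0:ℝ)..xmax, f y t * p y)) t)
    (hgeq : ∀ x ∈ Icc (0:ℝ) xmax, ∀ t ∈ Ici (0:ℝ),
      HasDerivAt (g x)
        ((-μ + β₀ * n₀ * x / m) * g x t -
          DI * (g x t - x / m * ∫ y in (0:ℝ)..xmax, g y t * p y)) t) :
    (∀ t > (0:ℝ),
      IntervalIntegrable (fun x => |g x t| * p x) MeasureTheory.volume 0 xmax) ∧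
    ∀ x ∈ Icc (0:ℝ) xmax,
      Tendsto (fun t => g x t) atTop (nhds 0) ∧
      Tendsto (fun t => f x t) atTop (nhds 0) :=
  linear_stability_DFE_general xmax m μ β₀ DS DI n₀ p hxmax hm hβ₀ hDS hDI hn₀ hp_nonneg hp_int
    hm_def hthreshold f g hf_smooth hg_smooth hzero_mean hfeq hgeq
end

section
/- Let g : J × ℝ₊ → ℝ be a solution of ∂g/∂t(x,t) = g(x,t)(−μ + β₀n₀x/m − D_I) + D_I(x/m)G(t), where G(t) = ∫₀^{x_max} g(x,t)p(x)dx, with C¹ initial data g₀ satisfying g₀ ≥ 0 on J and ⟨g₀⟩ > 0. Then G(t) > 0 for all t ≥ 0, and g(x,t) > 0 for all x ∈ (0, x_max] and all t > 0. -/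
open Real Set MeasureTheory Filter Function Topology Interval

/-!
For fixed `x > 0` the equation reads `∂ₜg = a g + b G` with `b = D_I x / m > 0`, so the integrating
factor shows that `e^{-a t} g(x, t)` increases strictly while `G > 0`. Hence `g(·, T) > 0` on
`(0, x_max]` whenever `G > 0` on `[0, T)`, and then `G(T) = ⟨g(·, T)⟩ > 0` because `p` has positive
mass there. Since `G` is continuous with `G(0) > 0`, a first time `T` with `G(T) ≤ 0` cannot exist.
-/

theorem continuousOn_intervalIntegral_mul_of_continuousOn_prod {X : Type*} [TopologicalSpace X]
    [WeaklyLocallyCompactSpace X] [FirstCountableTopology X] {f : ℝ → X → ℝ} {p : ℝ → ℝ}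
    {a b : ℝ} {s : Set X} (hs : IsClosed s) (hf : ContinuousOn (uncurry f) ([[a, b]] ×ˢ s))
    (hp : IntervalIntegrable p volume a b) :
    ContinuousOn (fun t => ∫ x in a..b, f x t * p x) s := by
  intro t₀ ht₀
  obtain ⟨K, hK, hKt₀⟩ := exists_compact_mem_nhds t₀
  obtain ⟨C, hC⟩ := (isCompact_uIcc.prod (hK.inter_left hs)).exists_bound_of_continuousOn
    (hf.mono (prod_mono_right inter_subset_left))
  have hKs : s ∩ K ∈ 𝓝[s] t₀ := inter_mem_nhdsWithin s hKt₀
  refine intervalIntegral.continuousWithinAt_of_dominated_interval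
    (bound := fun x => C * ‖p x‖) ?_ ?_ (hp.norm.const_mul C) ?_
  · filter_upwards [self_mem_nhdsWithin] with t ht
    exact (hp.continuousOn_mul (hf.uncurry_right t ht)).def'.aestronglyMeasurable
  · filter_upwards [hKs] with t ht
    refine ae_of_all _ fun x hx => ?_
    rw [norm_mul]
    exact mul_le_mul_of_nonneg_right (hC (x, t) ⟨uIoc_subset_uIcc hx, ht⟩) (norm_nonneg _)
  · refine ae_of_all _ fun x hx => ?_
    exact ((hf.uncurry_left x (uIoc_subset_uIcc hx)) t₀ ht₀).mul continuousWithinAt_const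

theorem intervalIntegral_mul_pos_of_integral_pos {f p : ℝ → ℝ} {a b : ℝ}
    (hp : ∀ x ∈ Ι a b, 0 ≤ p x) (hp_pos : 0 < ∫ x in a..b, p x) (hf : ∀ x ∈ Ι a b, 0 < f x)
    (hfp : IntervalIntegrable (fun x => f x * p x) volume a b) :
    0 < ∫ x in a..b, f x * p x := by
  have hp_ae : 0 ≤ᵐ[volume.restrict (Ι a b)] p :=
    (ae_restrict_iff' measurableSet_uIoc).2 (ae_of_all _ hp)
  obtain ⟨hab, hsupp⟩ := (intervalIntegral.integral_pos_iff_support_of_nonneg_ae' hp_ae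
    (intervalIntegral.intervalIntegrable_of_integral_ne_zero hp_pos.ne')).1 hp_pos
  have hfp_ae : 0 ≤ᵐ[volume.restrict (Ι a b)] fun x => f x * p x :=
    (ae_restrict_iff' measurableSet_uIoc).2
      (ae_of_all _ fun x hx => mul_nonneg (hf x hx).le (hp x hx))
  refine (intervalIntegral.integral_pos_iff_support_of_nonneg_ae' hfp_ae hfp).2 ⟨hab, ?_⟩
  have hsupp_eq : support (fun x => f x * p x) ∩ Ioc a b = support p ∩ Ioc a b := by
    ext x
    simp only [mem_inter_iff, mem_support, and_congr_left_iff]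
    intro hx
    rw [← uIoc_of_le hab.le] at hx
    simp [(hf x hx).ne']
  rwa [hsupp_eq]

theorem pos_of_hasDerivAt_mul_add_pos {u f : ℝ → ℝ} {c t₀ T : ℝ} (hT : t₀ < T)
    (hu : ∀ t ∈ Icc t₀ T, HasDerivAt u (u t * c + f t) t) (hf : ∀ t ∈ Ioo t₀ T, 0 < f t)
    (h₀ : 0 ≤ u t₀) : 0 < u T := by
  set v : ℝ → ℝ := fun t => exp (-c * t) * u t
  have hv : ∀ t ∈ Icc t₀ T, HasDerivAt v (exp (-c * t) * f t) t := by
    intro t ht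
    have hexp : HasDerivAt (fun t => exp (-c * t)) (exp (-c * t) * (-c)) t := by
      simpa using ((hasDerivAt_id t).const_mul (-c)).exp
    refine (hexp.mul (hu t ht)).congr_deriv ?_
    ring
  have hv_mono : StrictMonoOn v (Icc t₀ T) := by
    refine strictMonoOn_of_deriv_pos (convex_Icc t₀ T)
      (fun t ht => (hv t ht).continuousAt.continuousWithinAt) fun t ht => ?_
    rw [interior_Icc] at ht
    rw [(hv t (Ioo_subset_Icc_self ht)).deriv]
    exact mul_pos (exp_pos _) (hf t ht)
  have hvT : 0 < v T := calc
    0 ≤ v t₀ := mul_nonneg (exp_pos _).le h₀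
    _ < v T := hv_mono (left_mem_Icc.2 hT.le) (right_mem_Icc.2 hT.le) hT
  exact pos_of_mul_pos_right hvT (exp_pos _).le

theorem ContinuousOn.pos_of_forall_pos_Ico_imp_pos {G : ℝ → ℝ} {a : ℝ} (hG : ContinuousOn G (Ici a))
    (ha : 0 < G a) (hstep : ∀ T > a, (∀ s ∈ Ico a T, 0 < G s) → 0 < G T) :
    ∀ t ≥ a, 0 < G t := by
  by_contra! ⟨t₁, ht₁, hGt₁⟩
  set S := Ici a ∩ G ⁻¹' Iic 0
  have hS_bdd : BddBelow S := ⟨a, fun t ht => ht.1⟩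
  have hT : sInf S ∈ S := (hG.preimage_isClosed_of_isClosed isClosed_Ici isClosed_Iic).csInf_mem
    ⟨t₁, ht₁, hGt₁⟩ hS_bdd
  have haT : a < sInf S := lt_of_le_of_ne hT.1 fun h => (h ▸ hT.2 : G a ≤ 0).not_gt ha
  have hpos : ∀ s ∈ Ico a (sInf S), 0 < G s := fun s hs =>
    not_le.1 fun h => (csInf_le hS_bdd ⟨hs.1, h⟩).not_gt hs.2
  exact (hstep _ haT hpos).not_ge hT.2

theorem positivity_g_linearized_general
    (xmax m μ β₀ DI n₀ : ℝ) (p : ℝ → ℝ)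
    (hxmax : 0 < xmax) (hm : 0 < m)
    (hDI : 0 < DI)
    (hp_nonneg : ∀ x ∈ Icc (0:ℝ) xmax, 0 ≤ p x)
    (hp_int : ∫ x in (0:ℝ)..xmax, p x = 1)
    (g : ℝ → ℝ → ℝ)
    (hg_smooth : ContDiffOn ℝ 1 (Function.uncurry g) (Icc 0 xmax ×ˢ Ici 0))
    (hg₀_nonneg : ∀ x ∈ Icc (0:ℝ) xmax, 0 ≤ g x 0)
    (hg₀_mean_pos : 0 < ∫ x in (0:ℝ)..xmax, g x 0 * p x)
    (hgeq : ∀ x ∈ Icc (0:ℝ) xmax, ∀ t ∈ Ici (0:ℝ),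
      HasDerivAt (g x)
        (g x t * (-μ + β₀ * n₀ * x / m - DI) +
          DI * (x / m) * ∫ y in (0:ℝ)..xmax, g y t * p y) t) :
    (∀ t ≥ (0:ℝ), 0 < ∫ x in (0:ℝ)..xmax, g x t * p x) ∧
    ∀ x ∈ Ioc (0:ℝ) xmax, ∀ t > (0:ℝ), 0 < g x t := by
  set G : ℝ → ℝ := fun t => ∫ x in (0:ℝ)..xmax, g x t * p x
  have hp_pos : 0 < ∫ x in (0:ℝ)..xmax, p x := hp_int ▸ one_pos
  have hp_ii : IntervalIntegrable p volume 0 xmax :=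
    intervalIntegral.intervalIntegrable_of_integral_ne_zero hp_pos.ne'
  have hg_cont : ContinuousOn (uncurry g) ([[0, xmax]] ×ˢ Ici 0) := by
    rw [uIcc_of_le hxmax.le]
    exact hg_smooth.continuousOn
  have hG_cont : ContinuousOn G (Ici 0) :=
    continuousOn_intervalIntegral_mul_of_continuousOn_prod isClosed_Ici hg_cont hp_ii
  have hg_pos : ∀ T > 0, (∀ s ∈ Ico 0 T, 0 < G s) → ∀ x ∈ Ioc 0 xmax, 0 < g x T :=
    fun T hT hG x hx => pos_of_hasDerivAt_mul_add_pos hT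
      (fun t ht => hgeq x (Ioc_subset_Icc_self hx) t ht.1)
      (fun t ht => mul_pos (mul_pos hDI (div_pos hx.1 hm)) (hG t ⟨ht.1.le, ht.2⟩))
      (hg₀_nonneg x (Ioc_subset_Icc_self hx))
  have hG_pos : ∀ t ≥ 0, 0 < G t := by
    refine hG_cont.pos_of_forall_pos_Ico_imp_pos hg₀_mean_pos fun T hT hG => ?_
    have hIoc : Ι 0 xmax = Ioc 0 xmax := uIoc_of_le hxmax.le
    exact intervalIntegral_mul_pos_of_integral_pos
      (hIoc ▸ fun x hx => hp_nonneg x (Ioc_subset_Icc_self hx)) hp_pos (hIoc ▸ hg_pos T hT hG)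
      (hp_ii.continuousOn_mul (hg_cont.uncurry_right T hT.le))
  exact ⟨hG_pos, fun x hx t ht => hg_pos t ht (fun s hs => hG_pos s hs.1) x hx⟩

/-- Positivity for the `g`-equation of the linearization at the DFE:
if `g₀ ≥ 0` with `⟨g₀⟩ > 0`, then `G(t) = ⟨g(·,t)⟩ > 0` for all `t ≥ 0` and
`g(x,t) > 0` for all `x ∈ (0, x_max]` and `t > 0`. -/
theorem positivity_g_linearized
    (xmax m μ β₀ DI n₀ : ℝ) (p : ℝ → ℝ)
    (hxmax : 0 < xmax) (hm : 0 < m) (hμ : 0 < μ) (hβ₀ : 0 < β₀)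
    (hDI : 0 < DI) (hn₀ : 0 < n₀)
    (hp_nonneg : ∀ x ∈ Icc (0:ℝ) xmax, 0 ≤ p x) (hp0 : p 0 = 0)
    (hp_int : ∫ x in (0:ℝ)..xmax, p x = 1)
    (hm_def : m = ∫ x in (0:ℝ)..xmax, x * p x)
    (g : ℝ → ℝ → ℝ)
    (hg_smooth : ContDiffOn ℝ 1 (Function.uncurry g) (Icc 0 xmax ×ˢ Ici 0))
    (hg₀_nonneg : ∀ x ∈ Icc (0:ℝ) xmax, 0 ≤ g x 0)
    (hg₀_mean_pos : 0 < ∫ x in (0:ℝ)..xmax, g x 0 * p x)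
    (hgeq : ∀ x ∈ Icc (0:ℝ) xmax, ∀ t ∈ Ici (0:ℝ),
      HasDerivAt (g x)
        (g x t * (-μ + β₀ * n₀ * x / m - DI) +
          DI * (x / m) * ∫ y in (0:ℝ)..xmax, g y t * p y) t) :
    (∀ t ≥ (0:ℝ), 0 < ∫ x in (0:ℝ)..xmax, g x t * p x) ∧
    ∀ x ∈ Ioc (0:ℝ) xmax, ∀ t > (0:ℝ), 0 < g x t :=
  positivity_g_linearized_general xmax m μ β₀ DI n₀ p hxmax hm hDI hp_nonneg hp_int g hg_smooth
    hg₀_nonneg hg₀_mean_pos hgeq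
end

section
/- Let g : J × ℝ₊ → ℝ be a solution of ∂g/∂t(x,t) = g(x,t)(−μ + β₀n₀x/m − D_I) + D_I(x/m)G(t), where G(t) = ∫₀^{x_max} g(x,t)p(x)dx, with C¹ initial data g₀ satisfying g₀ ≥ 0 on J, and suppose g(x,t) ≥ 0 for all (x,t). Then for all t ≥ 0, 0 ≤ G(t) ≤ ⟨g₀⟩ · e^{(−μ + β₀ x_max n₀/m)t}; in particular, if β₀ x_max n₀/m < μ then G(t) → 0 as t → ∞. -/
/-!
Integrating the equation against `p` and using `⟨x⟩ = m`, the source term `D_I (x/m) G` contributes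
exactly `D_I G`, which cancels the loss `-D_I g`; bounding the remaining rate
`-μ + β₀ n₀ x / m` by its value at `x_max` (using `g, p ≥ 0`) gives `G' ≤ (-μ + β₀ x_max n₀ / m) G`,
and Grönwall's inequality gives the exponential bound.
-/

open Real Set Filter
open MeasureTheory Topology

theorem le_mul_exp_of_hasDerivAt_le_mul {f f' : ℝ → ℝ} {a K : ℝ} (hf : ContinuousOn f (Ici a))
    (hf' : ∀ t ∈ Ioi a, HasDerivAt f (f' t) t) (hle : ∀ t ∈ Ioi a, f' t ≤ K * f t)
    {t : ℝ} (ht : a ≤ t) : f t ≤ f a * exp (K * (t - a)) := by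
  -- `t ↦ e^{-K (t - a)} f t` has derivative `e^{-K (t - a)} (f' t - K f t) ≤ 0`
  set ψ : ℝ → ℝ := fun s => exp (-K * (s - a)) * f s
  have hψ : AntitoneOn ψ (Ici a) := by
    refine antitoneOn_of_hasDerivWithinAt_nonpos (convex_Ici a)
      (f' := fun s => exp (-K * (s - a)) * (f' s - K * f s)) ?_ (fun s hs => ?_) (fun s hs => ?_)
    · exact (Continuous.continuousOn (by fun_prop)).mul hf
    · rw [interior_Ici] at hs ⊢
      have hexp : HasDerivAt (fun s => exp (-K * (s - a))) (exp (-K * (s - a)) * -K) s := by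
        simpa using (((hasDerivAt_id s).sub_const a).const_mul (-K)).exp
      exact ((hexp.mul (hf' s hs)).congr_deriv (by ring)).hasDerivWithinAt
    · rw [interior_Ici] at hs
      exact mul_nonpos_of_nonneg_of_nonpos (exp_pos _).le (by linarith [hle s hs])
  have := hψ self_mem_Ici ht ht
  simp only [ψ, sub_self, mul_zero, exp_zero, one_mul] at this
  calc f t = exp (K * (t - a)) * (exp (-K * (t - a)) * f t) := by
        rw [← mul_assoc, ← exp_add, neg_mul, add_neg_cancel, exp_zero, one_mul]
    _ ≤ exp (K * (t - a)) * f a := by gcongr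
    _ = f a * exp (K * (t - a)) := mul_comm _ _

theorem tendsto_zero_of_le_mul_exp {f : ℝ → ℝ} {C L : ℝ} (hL : L < 0)
    (hf : ∀ᶠ t in atTop, 0 ≤ f t ∧ f t ≤ C * exp (L * t)) : Tendsto f atTop (𝓝 0) := by
  have hexp : Tendsto (fun t => C * exp (L * t)) atTop (𝓝 0) := by
    simpa using (tendsto_exp_atBot.comp (tendsto_id.const_mul_atTop_of_neg hL)).const_mul C
  exact squeeze_zero' (hf.mono fun _ h => h.1) (hf.mono fun _ h => h.2) hexp

section ParametricIntegral

variable {a b : ℝ} {p : ℝ → ℝ} {F F' : ℝ → ℝ → ℝ} {s : Set ℝ}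

theorem continuousOn_intervalIntegral_mul (hp : IntervalIntegrable p volume a b)
    (hs : IsClosed s) (hF : ContinuousOn (Function.uncurry F) (uIcc a b ×ˢ s)) :
    ContinuousOn (fun t => ∫ x in a..b, F x t * p x) s := by
  intro t₀ ht₀
  have hK : IsCompact (s ∩ Metric.closedBall t₀ 1) := (isCompact_closedBall t₀ 1).inter_left hs
  obtain ⟨M, hM⟩ := (isCompact_uIcc.prod hK).exists_bound_of_continuousOn
    (hF.mono (prod_mono subset_rfl inter_subset_left))
  refine intervalIntegral.continuousWithinAt_of_dominated_interval (bound := fun x => M * ‖p x‖)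
    ?_ ?_ (hp.norm.const_mul M) ?_
  · filter_upwards [self_mem_nhdsWithin] with t ht
    exact (hp.continuousOn_mul (hF.uncurry_right t ht)).def'.aestronglyMeasurable
  · filter_upwards [inter_mem_nhdsWithin s (Metric.closedBall_mem_nhds t₀ one_pos)] with t ht
    refine ae_of_all _ fun x hx => ?_
    rw [norm_mul]
    exact mul_le_mul_of_nonneg_right (hM (x, t) ⟨uIoc_subset_uIcc hx, ht⟩) (norm_nonneg _)
  · refine ae_of_all _ fun x hx => ?_
    exact ((hF.uncurry_left x (uIoc_subset_uIcc hx)) t₀ ht₀).mul continuousWithinAt_const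

theorem hasDerivAt_intervalIntegral_mul (hp : IntervalIntegrable p volume a b)
    (hs : IsCompact s) {t₀ : ℝ} (ht₀ : s ∈ 𝓝 t₀)
    (hF : ContinuousOn (Function.uncurry F) (uIcc a b ×ˢ s))
    (hF' : ContinuousOn (Function.uncurry F') (uIcc a b ×ˢ s))
    (hderiv : ∀ x ∈ uIcc a b, ∀ t ∈ s, HasDerivAt (F x) (F' x t) t) :
    HasDerivAt (fun t => ∫ x in a..b, F x t * p x) (∫ x in a..b, F' x t₀ * p x) t₀ := by
  obtain ⟨M, hM⟩ := (isCompact_uIcc.prod hs).exists_bound_of_continuousOn hF'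
  have hint : ∀ {G : ℝ → ℝ → ℝ}, ContinuousOn (Function.uncurry G) (uIcc a b ×ˢ s) → ∀ t ∈ s,
      IntervalIntegrable (fun x => G x t * p x) volume a b := fun hG t ht =>
    hp.continuousOn_mul (hG.uncurry_right t ht)
  refine (intervalIntegral.hasDerivAt_integral_of_dominated_loc_of_deriv_le
    (F := fun t x => F x t * p x) (F' := fun t x => F' x t * p x) (bound := fun x => M * ‖p x‖)
    ht₀ ?_ (hint hF t₀ (mem_of_mem_nhds ht₀))
    (hint hF' t₀ (mem_of_mem_nhds ht₀)).def'.aestronglyMeasurable ?_ (hp.norm.const_mul M) ?_).2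
  · filter_upwards [ht₀] with t ht using (hint hF t ht).def'.aestronglyMeasurable
  · refine ae_of_all _ fun x hx t ht => ?_
    rw [norm_mul]
    exact mul_le_mul_of_nonneg_right (hM (x, t) ⟨uIoc_subset_uIcc hx, ht⟩) (norm_nonneg _)
  · exact ae_of_all _ fun x hx t ht => (hderiv x (uIoc_subset_uIcc hx) t ht).mul_const (p x)

end ParametricIntegral

theorem integral_linearized_rhs_le {a b m D L : ℝ} {p r f : ℝ → ℝ} (hab : a ≤ b)
    (hp : IntervalIntegrable p volume a b) (hm : m = ∫ x in a..b, x * p x) (hm0 : m ≠ 0)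
    (hf : ContinuousOn f (Icc a b)) (hr : ContinuousOn r (Icc a b))
    (hfp : ∀ x ∈ Icc a b, 0 ≤ f x * p x) (hrL : ∀ x ∈ Icc a b, r x ≤ L) :
    ∫ x in a..b, (f x * (r x - D) + D * (x / m) * ∫ y in a..b, f y * p y) * p x
      ≤ L * ∫ x in a..b, f x * p x := by
  rw [← uIcc_of_le hab] at hf hr
  set F := ∫ y in a..b, f y * p y
  have hxp : IntervalIntegrable (fun x => x * p x) volume a b :=
    intervalIntegral.intervalIntegrable_of_integral_ne_zero (hm ▸ hm0)
  have hfp_int : IntervalIntegrable (fun x => f x * p x) volume a b := hp.continuousOn_mul hf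
  have hfrp_int : IntervalIntegrable (fun x => f x * r x * p x) volume a b :=
    hp.continuousOn_mul (hf.mul hr)
  -- the mean of `x / m` is `1`, so the source term exactly cancels the `- D` in the rate
  have hcancel : ∫ x in a..b, (f x * (r x - D) + D * (x / m) * F) * p x
      = ∫ x in a..b, f x * r x * p x := by
    have hsplit : (fun x => (f x * (r x - D) + D * (x / m) * F) * p x)
        = fun x => f x * r x * p x - D * (f x * p x) + D * F / m * (x * p x) := by
      ext x; field_simp
    rw [hsplit, intervalIntegral.integral_add (hfrp_int.sub (hfp_int.const_mul D))
      (hxp.const_mul _), intervalIntegral.integral_sub hfrp_int (hfp_int.const_mul D),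
      intervalIntegral.integral_const_mul, intervalIntegral.integral_const_mul, ← hm]
    field_simp
    ring
  rw [hcancel, ← intervalIntegral.integral_const_mul]
  refine intervalIntegral.integral_mono_on hab hfrp_int (hfp_int.const_mul L) fun x hx => ?_
  calc f x * r x * p x = r x * (f x * p x) := by ring
    _ ≤ L * (f x * p x) := mul_le_mul_of_nonneg_right (hrL x hx) (hfp x hx)

theorem hasDerivAt_intervalIntegral_mul_of_feedback {a b t : ℝ} {p k h : ℝ → ℝ}
    {g : ℝ → ℝ → ℝ} {s : Set ℝ} (hp : IntervalIntegrable p volume a b) (hk : Continuous k)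
    (hh : Continuous h) (hs : IsClosed s) (ht : s ∈ 𝓝 t)
    (hg : ContinuousOn (Function.uncurry g) (uIcc a b ×ˢ s))
    (hgeq : ∀ x ∈ uIcc a b, ∀ τ ∈ s,
      HasDerivAt (g x) (g x τ * k x + h x * ∫ y in a..b, g y τ * p y) τ) :
    HasDerivAt (fun τ => ∫ x in a..b, g x τ * p x)
      (∫ x in a..b, (g x t * k x + h x * ∫ y in a..b, g y t * p y) * p x) t := by
  obtain ⟨ε, hε, hball⟩ := Metric.nhds_basis_closedBall.mem_iff.1 ht
  have hG : ContinuousOn (fun q : ℝ × ℝ => ∫ y in a..b, g y q.2 * p y)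
      (uIcc a b ×ˢ Metric.closedBall t ε) :=
    ((continuousOn_intervalIntegral_mul hp hs hg).mono hball).comp continuousOn_snd
      fun q hq => hq.2
  have hg_ball := hg.mono (prod_mono subset_rfl hball)
  refine hasDerivAt_intervalIntegral_mul hp (isCompact_closedBall t ε)
    (Metric.closedBall_mem_nhds t hε) hg_ball ?_ fun x hx τ hτ => hgeq x hx τ (hball hτ)
  exact (hg_ball.mul (by fun_prop)).add ((Continuous.continuousOn (by fun_prop)).mul hG)

theorem exponential_bound_G_linearized_general
    (xmax m μ β₀ DI n₀ : ℝ) (p : ℝ → ℝ)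
    (hxmax : 0 < xmax) (hm : 0 < m) (hβ₀ : 0 < β₀)
    (hn₀ : 0 < n₀)
    (hp_nonneg : ∀ x ∈ Icc (0:ℝ) xmax, 0 ≤ p x)
    (hp_int : ∫ x in (0:ℝ)..xmax, p x = 1)
    (hm_def : m = ∫ x in (0:ℝ)..xmax, x * p x)
    (g : ℝ → ℝ → ℝ)
    (hg_smooth : ContDiffOn ℝ 1 (Function.uncurry g) (Icc 0 xmax ×ˢ Ici 0))
    (hg_nonneg : ∀ x ∈ Icc (0:ℝ) xmax, ∀ t ∈ Ici (0:ℝ), 0 ≤ g x t)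
    (hgeq : ∀ x ∈ Icc (0:ℝ) xmax, ∀ t ∈ Ici (0:ℝ),
      HasDerivAt (g x)
        (g x t * (-μ + β₀ * n₀ * x / m - DI) +
          DI * (x / m) * ∫ y in (0:ℝ)..xmax, g y t * p y) t) :
    (∀ t ≥ (0:ℝ),
      0 ≤ (∫ x in (0:ℝ)..xmax, g x t * p x) ∧
      (∫ x in (0:ℝ)..xmax, g x t * p x) ≤
        (∫ x in (0:ℝ)..xmax, g x 0 * p x) *
          Real.exp ((-μ + β₀ * xmax * n₀ / m) * t)) ∧
    (β₀ * xmax * n₀ / m < μ →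
      Tendsto (fun t => ∫ x in (0:ℝ)..xmax, g x t * p x) atTop (nhds 0)) := by
  have hI : uIcc 0 xmax = Icc 0 xmax := uIcc_of_le hxmax.le
  have hp : IntervalIntegrable p volume 0 xmax :=
    intervalIntegral.intervalIntegrable_of_integral_ne_zero (by simp [hp_int])
  have hg : ContinuousOn (Function.uncurry g) (uIcc 0 xmax ×ˢ Ici 0) :=
    hI ▸ hg_smooth.continuousOn
  set G := fun t => ∫ x in (0:ℝ)..xmax, g x t * p x
  set L := -μ + β₀ * xmax * n₀ / m
  have hG_nonneg : ∀ t ≥ (0:ℝ), 0 ≤ G t := fun t ht => intervalIntegral.integral_nonneg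
    hxmax.le fun x hx => mul_nonneg (hg_nonneg x hx t ht) (hp_nonneg x hx)
  have hG_deriv : ∀ t ∈ Ioi (0:ℝ), HasDerivAt G (∫ x in (0:ℝ)..xmax,
      (g x t * (-μ + β₀ * n₀ * x / m - DI) + DI * (x / m) * G t) * p x) t := fun t ht =>
    hasDerivAt_intervalIntegral_mul_of_feedback (k := fun x => -μ + β₀ * n₀ * x / m - DI)
      (h := fun x => DI * (x / m)) hp (by fun_prop) (by fun_prop) isClosed_Ici (Ici_mem_nhds ht)
      hg fun x hx τ hτ => hgeq x (hI ▸ hx) τ hτ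
  have hG_rate : ∀ t ∈ Ioi (0:ℝ), ∫ x in (0:ℝ)..xmax,
      (g x t * (-μ + β₀ * n₀ * x / m - DI) + DI * (x / m) * G t) * p x ≤ L * G t := fun t ht =>
    integral_linearized_rhs_le (r := fun x => -μ + β₀ * n₀ * x / m) hxmax.le hp hm_def hm.ne'
      (hI ▸ hg.uncurry_right t (Ioi_subset_Ici_self ht)) (by fun_prop)
      (fun x hx => mul_nonneg (hg_nonneg x hx t (Ioi_subset_Ici_self ht)) (hp_nonneg x hx))
      fun x hx => by
        rw [show L = -μ + β₀ * n₀ * xmax / m by ring]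
        gcongr
        exact hx.2
  have hG_le : ∀ t ≥ (0:ℝ), G t ≤ G 0 * exp (L * t) := fun t ht => by
    simpa using le_mul_exp_of_hasDerivAt_le_mul
      (continuousOn_intervalIntegral_mul hp isClosed_Ici hg) hG_deriv hG_rate ht
  refine ⟨fun t ht => ⟨hG_nonneg t ht, hG_le t ht⟩, fun hlt => ?_⟩
  exact tendsto_zero_of_le_mul_exp (by linarith) <|
    (eventually_ge_atTop 0).mono fun t ht => ⟨hG_nonneg t ht, hG_le t ht⟩

/-- Exponential bound for `G(t) = ⟨g(·,t)⟩` in the linearization at the DFE: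
if `g ≥ 0` then `0 ≤ G(t) ≤ ⟨g₀⟩ e^{(-μ + β₀ x_max n₀/m)t}`; in particular
`G(t) → 0` as `t → ∞` whenever `β₀ x_max n₀/m < μ`. -/
theorem exponential_bound_G_linearized
    (xmax m μ β₀ DI n₀ : ℝ) (p : ℝ → ℝ)
    (hxmax : 0 < xmax) (hm : 0 < m) (hμ : 0 < μ) (hβ₀ : 0 < β₀)
    (hDI : 0 < DI) (hn₀ : 0 < n₀)
    (hp_nonneg : ∀ x ∈ Icc (0:ℝ) xmax, 0 ≤ p x) (hp0 : p 0 = 0)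
    (hp_int : ∫ x in (0:ℝ)..xmax, p x = 1)
    (hm_def : m = ∫ x in (0:ℝ)..xmax, x * p x)
    (g : ℝ → ℝ → ℝ)
    (hg_smooth : ContDiffOn ℝ 1 (Function.uncurry g) (Icc 0 xmax ×ˢ Ici 0))
    (hg₀_nonneg : ∀ x ∈ Icc (0:ℝ) xmax, 0 ≤ g x 0)
    (hg_nonneg : ∀ x ∈ Icc (0:ℝ) xmax, ∀ t ∈ Ici (0:ℝ), 0 ≤ g x t)
    (hgeq : ∀ x ∈ Icc (0:ℝ) xmax, ∀ t ∈ Ici (0:ℝ),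
      HasDerivAt (g x)
        (g x t * (-μ + β₀ * n₀ * x / m - DI) +
          DI * (x / m) * ∫ y in (0:ℝ)..xmax, g y t * p y) t) :
    (∀ t ≥ (0:ℝ),
      0 ≤ (∫ x in (0:ℝ)..xmax, g x t * p x) ∧
      (∫ x in (0:ℝ)..xmax, g x t * p x) ≤
        (∫ x in (0:ℝ)..xmax, g x 0 * p x) *
          Real.exp ((-μ + β₀ * xmax * n₀ / m) * t)) ∧
    (β₀ * xmax * n₀ / m < μ →
      Tendsto (fun t => ∫ x in (0:ℝ)..xmax, g x t * p x) atTop (nhds 0)) :=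
  exponential_bound_G_linearized_general xmax m μ β₀ DI n₀ p hxmax hm hβ₀ hn₀ hp_nonneg hp_int
    hm_def g hg_smooth hg_nonneg hgeq
end
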